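/- arXiv:1808.00056 — 2 statements merged into one kernel-verified Lean document; each statement's English description precedes it below -/
import Mathlib

section
/- Let F be a field that is finitely generated as a field extension of ℚ, and let L := {x ∈ F : x is algebraic over ℚ} be the relative algebraic closure of ℚ in F. Then L is a number field, i.e., L is finite-dimensional as a ℚ-vector space. -/
/-!
Choose a transcendence basis `s` of `F/ℚ` and put `K = ℚ(s)`, so that `F/K` is finite. As `K` is
a rational function field and polynomial rings are integrally closed, `ℚ` is algebraically closed
in `K`. For `x ∈ F` algebraic over `ℚ`, the coefficients of the minimal polynomial of `x` over `K`
are integral over `ℚ` (they are symmetric functions of conjugates of `x`), hence lie in `ℚ`, so it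
is the minimal polynomial of `x` over `ℚ`. Every element of the relative algebraic closure
therefore has degree at most `[F : K]`, and by the primitive element theorem a separable extension
of bounded degree is finite.
-/

open IntermediateField Module Polynomial

theorem IsIntegral.eq_algebraMap_algHom_apply {k A : Type*} [Field k] [CommRing A] [IsDomain A]
    [Algebra k A] (φ : A →ₐ[k] k) {a : A} (ha : IsIntegral k a) : a = algebraMap k A (φ a) := by
  by_contra hne
  set b := a - algebraMap k A (φ a)
  have hb : b ≠ 0 := sub_ne_zero.mpr hne
  have hφb : φ b = 0 := by simp [b]
  -- `φ b = 0` is a root of the minimal polynomial of `b`, whose constant term cannot vanish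
  have hroot : aeval (φ b) (minpoly k b) = 0 := by
    rw [aeval_algHom_apply, minpoly.aeval, map_zero]
  rw [hφb, aeval_def, eval₂_at_zero, Algebra.algebraMap_self, RingHom.id_apply] at hroot
  exact minpoly.coeff_zero_ne_zero (ha.sub isIntegral_algebraMap) hb hroot

theorem MvPolynomial.integralClosure_fractionRing_eq_bot (k σ : Type*) [Field k] :
    integralClosure k (FractionRing (MvPolynomial σ k)) = ⊥ := by
  refine eq_bot_iff.mpr fun y (hy : IsIntegral k y) => ?_
  obtain ⟨p, rfl⟩ := (IsIntegrallyClosed.isIntegral_iff (R := MvPolynomial σ k)).mp hy.tower_top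
  have hp : IsIntegral k p :=
    (isIntegral_algHom_iff
      (IsScalarTower.toAlgHom k (MvPolynomial σ k) (FractionRing (MvPolynomial σ k)))
      (IsFractionRing.injective _ _)).mp hy
  rw [hp.eq_algebraMap_algHom_apply (aeval fun _ => 0), ← IsScalarTower.algebraMap_apply]
  exact Subalgebra.algebraMap_mem _ _

theorem AlgebraicIndependent.integralClosure_adjoin_range_eq_bot {k F ι : Type*} [Field k]
    [Field F] [Algebra k F] {s : ι → F} (hs : AlgebraicIndependent k s) :
    integralClosure k (adjoin k (Set.range s)) = ⊥ := by
  rw [← integralClosure_map_algEquiv hs.aevalEquivField,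
    MvPolynomial.integralClosure_fractionRing_eq_bot, Algebra.map_bot]

theorem minpoly.map_algebraMap_of_integralClosure_eq_bot {k K A : Type*} [Field k] [Field K]
    [CommRing A] [Algebra k K] [Algebra K A] [Algebra k A] [IsScalarTower k K A]
    (hK : integralClosure k K = ⊥) {x : A} (hx : IsIntegral k x) :
    (minpoly k x).map (algebraMap k K) = minpoly K x := by
  refine minpoly.map_algebraMap hx ?_
  have hlifts := integralClosure.mem_lifts_of_monic_of_dvd_map K (minpoly.monic hx)
    (minpoly.monic hx.tower_top) (minpoly.dvd_map_of_isScalarTower k K x)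
  rw [lifts_iff_coeff_lifts] at hlifts ⊢
  intro n
  obtain ⟨c, hc⟩ := hlifts n
  obtain ⟨r, hr⟩ := Algebra.mem_bot.mp (hK ▸ c.2 : (c : K) ∈ (⊥ : Subalgebra k K))
  exact ⟨r, hr.trans hc⟩

theorem FiniteDimensional.of_forall_natDegree_minpoly_le {k L : Type*} [Field k] [Field L]
    [Algebra k L] [Algebra.IsSeparable k L] {n : ℕ}
    (h : ∀ y : L, (minpoly k y).natDegree ≤ n) : FiniteDimensional k L := by
  refine Module.rank_lt_aleph0_iff.mp
    ((rank_le (n := n) fun s hs => ?_).trans_lt Cardinal.natCast_lt_aleph0)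
  set E := adjoin k (s : Set L)
  have : FiniteDimensional k E :=
    finiteDimensional_adjoin fun y _ => (Algebra.IsSeparable.isSeparable k y).isIntegral
  obtain ⟨α, hα⟩ := Field.exists_primitive_element k E
  calc s.card = finrank k (Submodule.span k (s : Set L)) :=
        (finrank_span_finset_eq_card hs).symm
    _ ≤ finrank k E.toSubalgebra.toSubmodule :=
        Submodule.finrank_mono (Submodule.span_le.mpr (subset_adjoin k (s : Set L)))
    _ = (minpoly k α).natDegree := by
        rw [← adjoin.finrank (Algebra.IsIntegral.isIntegral α), hα, finrank_top']; rfl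
    _ = (minpoly k (α : L)).natDegree := by rw [minpoly_eq]
    _ ≤ n := h α

theorem algebraicClosure_finiteDimensional_of_essFiniteType (k F : Type*) [Field k]
    [PerfectField k] [Field F] [Algebra k F] [Algebra.EssFiniteType k F] :
    FiniteDimensional k (algebraicClosure k F) := by
  obtain ⟨ι, s, hs⟩ := exists_isTranscendenceBasis' k F
  set K := adjoin k (Set.range s)
  have : Algebra.IsAlgebraic K F := hs.isAlgebraic_field
  have : Algebra.EssFiniteType K F := .of_comp k K F
  have : FiniteDimensional K F := Algebra.finite_of_essFiniteType_of_isAlgebraic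
  refine FiniteDimensional.of_forall_natDegree_minpoly_le (n := finrank K F) fun y => ?_
  have hy : IsIntegral k (y : F) := (mem_algebraicClosure_iff.mp y.2).isIntegral
  calc (minpoly k y).natDegree = (minpoly K (y : F)).natDegree := by
        rw [minpoly_eq, ← minpoly.map_algebraMap_of_integralClosure_eq_bot
          hs.1.integralClosure_adjoin_range_eq_bot hy, natDegree_map]
    _ ≤ finrank K F := minpoly.natDegree_le _

/-- If `F` is a field that is finitely generated as a field extension of `ℚ`,
then the relative algebraic closure of `ℚ` in `F` (the intermediate field of all elements
of `F` algebraic over `ℚ`) is a number field, i.e. finite-dimensional over `ℚ`. -/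
theorem relativeAlgebraicClosure_finiteDimensional (F : Type*) [Field F] [Algebra ℚ F]
    (hFG : ∃ S : Finset F, IntermediateField.adjoin ℚ (S : Set F) = ⊤) :
    FiniteDimensional ℚ (algebraicClosure ℚ F) := by
  have : Algebra.EssFiniteType ℚ F := fg_top_iff.mp hFG
  exact algebraicClosure_finiteDimensional_of_essFiniteType ℚ F
end

section
/- Let F be a field that is finitely generated as a field extension of ℚ, and fix an algebraic closure F̄ of F. Then there exist elements m₁, m₂ ∈ F such that the intermediate field K := F(√m₁, √m₂) of F̄/F, generated over F by square roots of m₁ and m₂, satisfies [K : F] = 4; that is, F admits a separable biquadratic extension. -/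
/-!
Choose a transcendence basis `T` of `F/ℚ`; then `F` is finite over `L = ℚ(T)`, so `F/L` has only
finitely many intermediate fields. A non-square of `ℚ` stays a non-square in `L`, the fraction
field of the integrally closed ring `ℚ[T]`, which retracts onto `ℚ`. Hence for distinct squarefree
`m, n ≠ 1` the fields `L(√m)` and `L(√n)` differ, so only finitely many squarefree integers are
squares in `F`. Two large primes `p, q` then make `p`, `q` and `pq` non-squares in `F`, and
`[F(√p, √q) : F] = 4`.
-/

open IntermediateField Polynomial

section SquareRoot

variable {K E : Type*} [Field K] [Field E] [Algebra K E] {a b : K} {y : E}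

lemma isIntegral_of_sq_eq_algebraMap (hy : y ^ 2 = algebraMap K E a) : IsIntegral K y :=
  ⟨X ^ 2 - C a, monic_X_pow_sub_C a two_ne_zero, by simp [hy]⟩

lemma exists_eq_add_mul_of_mem_adjoin_of_sq_eq (hy : y ^ 2 = algebraMap K E a) {z : E}
    (hz : z ∈ K⟮y⟯) : ∃ c d : K, z = algebraMap K E c + algebraMap K E d * y := by
  rw [← mem_toSubalgebra, adjoin_simple_toSubalgebra_of_isAlgebraic
    (isIntegral_of_sq_eq_algebraMap hy).isAlgebraic, Algebra.adjoin_singleton_eq_range_aeval] at hz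
  obtain ⟨f, rfl⟩ := hz
  set r := f %ₘ (X ^ 2 - C a)
  have hr : r.degree ≤ 1 := by
    have := degree_modByMonic_lt f (monic_X_pow_sub_C a two_ne_zero)
    rw [degree_X_pow_sub_C two_pos] at this
    exact Order.le_of_lt_succ (by exact_mod_cast this)
  refine ⟨r.coeff 0, r.coeff 1, ?_⟩
  rw [AlgHom.toRingHom_eq_coe, RingHom.coe_coe,
    ← aeval_modByMonic_eq_self_of_root (q := X ^ 2 - C a) (by simp [hy])]
  change aeval y r = _
  conv_lhs => rw [eq_X_add_C_of_degree_le_one hr]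
  simp only [map_add, map_mul, aeval_C, aeval_X]
  ring

lemma not_isSquare_algebraMap_adjoin_of_sq_eq (h2 : (2 : K) ≠ 0) (ha : ¬IsSquare a)
    (hb : ¬IsSquare b) (hab : ¬IsSquare (a * b)) (hy : y ^ 2 = algebraMap K E a) :
    ¬IsSquare (algebraMap K K⟮y⟯ b) := by
  rintro ⟨w, hw⟩
  obtain ⟨c, d, hcd⟩ := exists_eq_add_mul_of_mem_adjoin_of_sq_eq hy w.2
  have hwE : (w : E) * w = algebraMap K E b := by
    simpa using congrArg (Subtype.val : K⟮y⟯ → E) hw.symm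
  have key : algebraMap K E (c ^ 2 + d ^ 2 * a - b) + algebraMap K E (2 * c * d) * y = 0 := by
    rw [← sub_eq_zero.mpr hwE, hcd]
    simp only [map_add, map_sub, map_mul, map_pow, map_ofNat, ← hy]
    ring
  by_cases hcd0 : 2 * c * d = 0
  · rw [hcd0, map_zero, zero_mul, add_zero, map_eq_zero_iff _ (algebraMap K E).injective,
      sub_eq_zero] at key
    rcases mul_eq_zero.mp hcd0 with hc | rfl
    · obtain rfl := (mul_eq_zero.mp hc).resolve_left h2
      exact hab ⟨d * a, by rw [← key]; ring⟩
    · exact hb ⟨c, by rw [← key]; ring⟩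
  · -- otherwise `y` itself lies in `K`
    have hyK : y = algebraMap K E (-(c ^ 2 + d ^ 2 * a - b) / (2 * c * d)) := by
      rw [map_div₀, eq_div_iff (by simpa using hcd0), map_neg]
      linear_combination key
    refine ha ⟨-(c ^ 2 + d ^ 2 * a - b) / (2 * c * d), (algebraMap K E).injective ?_⟩
    rw [map_mul, ← hyK, ← hy, sq]

lemma finrank_adjoin_of_sq_eq (ha : ¬IsSquare a) (hy : y ^ 2 = algebraMap K E a) :
    Module.finrank K K⟮y⟯ = 2 := by
  have hirr : Irreducible (X ^ 2 - C a) :=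
    X_pow_sub_C_irreducible_of_prime Nat.prime_two fun c hc ↦ ha ⟨c, by rw [← hc, sq]⟩
  have hmin : minpoly K y = X ^ 2 - C a :=
    (minpoly.eq_of_irreducible_of_monic hirr (by simp [hy]) (monic_X_pow_sub_C a two_ne_zero)).symm
  rw [adjoin.finrank (isIntegral_of_sq_eq_algebraMap hy), hmin, natDegree_X_pow_sub_C]

lemma adjoin_setOf_sq_eq {c : E} (hy : y ^ 2 = c) : adjoin K {x : E | x ^ 2 = c} = K⟮y⟯ := by
  refine le_antisymm (adjoin_le_iff.mpr fun x hx ↦ ?_)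
    (adjoin_simple_le_iff.mpr (subset_adjoin _ _ hy))
  rcases sq_eq_sq_iff_eq_or_eq_neg.mp (hx.trans hy.symm) with rfl | rfl
  · exact mem_adjoin_simple_self K x
  · exact neg_mem (mem_adjoin_simple_self K y)

end SquareRoot

lemma isSquare_of_isSquare_algebraMap_fractionRing {k A K : Type*} [Field k] [CommRing A]
    [IsDomain A] [IsIntegrallyClosed A] [Algebra k A] [Field K] [Algebra A K] [IsFractionRing A K]
    (φ : A →ₐ[k] k) {r : k} (h : IsSquare (algebraMap A K (algebraMap k A r))) : IsSquare r := by
  obtain ⟨z, hz⟩ := h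
  obtain ⟨w, rfl⟩ := IsIntegrallyClosed.exists_algebraMap_eq_of_isIntegral_pow (R := A) (x := z)
    two_pos (by rw [sq, ← hz]; exact isIntegral_algebraMap)
  rw [← map_mul, (IsFractionRing.injective A K).eq_iff] at hz
  exact ⟨φ w, by rw [← map_mul, ← hz, AlgHom.commutes, Algebra.algebraMap_self_apply]⟩

lemma AlgebraicIndependent.isSquare_of_isSquare_algebraMap_adjoin {ι k E : Type*} [Field k]
    [Field E] [Algebra k E] {x : ι → E} (hx : AlgebraicIndependent k x) {r : k}
    (h : IsSquare (algebraMap k (adjoin k (Set.range x)) r)) : IsSquare r := by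
  refine isSquare_of_isSquare_algebraMap_fractionRing (A := MvPolynomial ι k)
    (K := FractionRing (MvPolynomial ι k)) (MvPolynomial.aeval 0) ?_
  rw [← IsScalarTower.algebraMap_apply, ← hx.reprField.commutes]
  exact h.map hx.reprField

lemma finite_setOf_isSquare_algebraMap {L E ι : Type*} [Field L] [Field E] [Algebra L E]
    [Finite (IntermediateField L E)] (h2 : (2 : L) ≠ 0) {a : ι → L} {s : Set ι}
    (ha : ∀ i ∈ s, ¬IsSquare (a i)) (hab : ∀ i ∈ s, ∀ j ∈ s, i ≠ j → ¬IsSquare (a i * a j)) :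
    {i ∈ s | IsSquare (algebraMap L E (a i))}.Finite := by
  set S := {i ∈ s | IsSquare (algebraMap L E (a i))}
  have hsqrt (i : S) : ∃ y : E, y ^ 2 = algebraMap L E (a i) := by
    obtain ⟨y, hy⟩ := i.2.2
    exact ⟨y, by rw [hy, sq]⟩
  choose y hy using hsqrt
  refine Set.finite_coe_iff.mp (Finite.of_injective (fun i ↦ L⟮y i⟯) fun i j hij ↦ ?_)
  by_contra hne
  refine not_isSquare_algebraMap_adjoin_of_sq_eq h2 (ha i i.2.1) (ha j j.2.1)
    (hab i i.2.1 j j.2.1 (Subtype.coe_ne_coe.mpr hne)) (hy i) ⟨⟨y j, ?_⟩, ?_⟩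
  · rw [show L⟮y i⟯ = L⟮y j⟯ from hij]
    exact mem_adjoin_simple_self L (y j)
  · exact Subtype.ext (by simp [← hy j, sq])

lemma finrank_adjoin_sqrt_sqrt {F E : Type*} [Field F] [Field E] [Algebra F E] [IsAlgClosed E]
    (h2 : (2 : F) ≠ 0) {m₁ m₂ : F} (h₁ : ¬IsSquare m₁) (h₂ : ¬IsSquare m₂)
    (h₁₂ : ¬IsSquare (m₁ * m₂)) :
    Module.finrank F (adjoin F ({x : E | x ^ 2 = algebraMap F E m₁} ∪
      {x : E | x ^ 2 = algebraMap F E m₂})) = 4 := by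
  obtain ⟨s, hs⟩ := IsAlgClosed.exists_pow_nat_eq (algebraMap F E m₁) two_pos
  obtain ⟨t, ht⟩ := IsAlgClosed.exists_pow_nat_eq (algebraMap F E m₂) two_pos
  have hts : t ^ 2 = algebraMap F⟮s⟯ E (algebraMap F F⟮s⟯ m₂) := ht
  rw [adjoin_union, adjoin_setOf_sq_eq hs, adjoin_setOf_sq_eq ht, ← adjoin_union,
    ← adjoin_adjoin_left]
  change Module.finrank F F⟮s⟯⟮t⟯ = 4
  rw [← Module.finrank_mul_finrank F F⟮s⟯, finrank_adjoin_of_sq_eq h₁ hs,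
    finrank_adjoin_of_sq_eq (not_isSquare_algebraMap_adjoin_of_sq_eq h2 h₁ h₂ h₁₂ hs) hts]

lemma Nat.eq_of_isSquare_mul_of_squarefree {m n : ℕ} (hm : Squarefree m) (hn : Squarefree n)
    (h : IsSquare (m * n)) : m = n := by
  obtain ⟨k, hk⟩ := h
  obtain ⟨a, rfl⟩ : m ∣ k :=
    (hm.dvd_pow_iff_dvd two_ne_zero).mp ⟨n, by rw [sq, ← hk]⟩
  have hn' : n = m * (a * a) := mul_left_cancel₀ hm.ne_zero (by rw [hk]; ring)
  obtain rfl : a = 1 := Nat.isUnit_iff.mp (hn a ⟨m, by rw [hn']; ring⟩)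
  simpa using hn'.symm

lemma finite_setOf_squarefree_isSquare (F : Type*) [Field F] [Algebra ℚ F]
    [Algebra.EssFiniteType ℚ F] : {n : ℕ | Squarefree n ∧ n ≠ 1 ∧ IsSquare (n : F)}.Finite := by
  have : CharZero F := charZero_of_injective_algebraMap (algebraMap ℚ F).injective
  obtain ⟨T, hT⟩ := exists_isTranscendenceBasis ℚ F
  set L := adjoin ℚ (Set.range ((↑) : T → F))
  have := hT.isAlgebraic_field
  have : Algebra.EssFiniteType L F := .of_comp ℚ L F
  have : Module.Finite L F := Algebra.finite_of_essFiniteType_of_isAlgebraic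
  have : Finite (IntermediateField L F) :=
    Field.finite_intermediateField_of_exists_primitive_element L F
      (Field.exists_primitive_element L F)
  have hsq (n : ℕ) (h : IsSquare (n : L)) : IsSquare n :=
    Rat.isSquare_natCast_iff.mp (hT.1.isSquare_of_isSquare_algebraMap_adjoin (by simpa using h))
  refine (finite_setOf_isSquare_algebraMap (E := F) two_ne_zero (a := (Nat.cast : ℕ → L))
    (s := {n | Squarefree n ∧ n ≠ 1}) ?_ ?_).subset ?_
  · rintro n ⟨hn, hn1⟩ h
    exact hn1 (Nat.eq_of_isSquare_mul_of_squarefree hn squarefree_one (by simpa using hsq n h))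
  · rintro m ⟨hm, -⟩ n ⟨hn, -⟩ hmn h
    exact hmn (Nat.eq_of_isSquare_mul_of_squarefree hm hn (hsq _ (by exact_mod_cast h)))
  · rintro n ⟨hn, hn1, h⟩
    exact ⟨⟨hn, hn1⟩, by simpa using h⟩

lemma exists_primes_notMem {B : Set ℕ} (hB : B.Finite) :
    ∃ p q : ℕ, p.Prime ∧ q.Prime ∧ p ≠ q ∧ p ∉ B ∧ q ∉ B ∧ p * q ∉ B := by
  obtain ⟨N, hN⟩ := hB.bddAbove
  obtain ⟨p, hpN, hp⟩ := Nat.exists_infinite_primes (N + 1)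
  obtain ⟨q, hpq, hq⟩ := Nat.exists_infinite_primes (p + 1)
  have hlt : ∀ n, N < n → n ∉ B := fun n hn hB ↦ (hN hB).not_gt hn
  exact ⟨p, q, hp, hq, by omega, hlt p (by omega), hlt q (by omega),
    hlt _ (by nlinarith [hp.two_le])⟩

/-- If `F` is a field that is finitely generated as a field extension of `ℚ`,
then there exist `m₁, m₂ ∈ F` such that the intermediate field `K = F(√m₁, √m₂)` of `F̄/F`,
generated over `F` by the square roots of `m₁` and `m₂` in a fixed algebraic closure `F̄`,
satisfies `[K : F] = 4`; i.e. `F` admits a (separable) biquadratic extension. -/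
theorem exists_biquadratic_extension (F : Type*) [Field F] [Algebra ℚ F]
    (hFG : ∃ S : Finset F, IntermediateField.adjoin ℚ (S : Set F) = ⊤) :
    ∃ m₁ m₂ : F,
      Module.finrank F
        (IntermediateField.adjoin F
          ({x : AlgebraicClosure F | x ^ 2 = algebraMap F (AlgebraicClosure F) m₁} ∪
           {x : AlgebraicClosure F | x ^ 2 = algebraMap F (AlgebraicClosure F) m₂})) = 4 := by
  have : CharZero F := charZero_of_injective_algebraMap (algebraMap ℚ F).injective
  have : Algebra.EssFiniteType ℚ F := fg_top_iff.mp hFG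
  obtain ⟨p, q, hp, hq, hpq, hpF, hqF, hpqF⟩ :=
    exists_primes_notMem (finite_setOf_squarefree_isSquare F)
  have hpq_sf : Squarefree (p * q) :=
    Nat.squarefree_mul_iff.mpr ⟨(Nat.coprime_primes hp hq).mpr hpq, hp.squarefree, hq.squarefree⟩
  refine ⟨p, q, finrank_adjoin_sqrt_sqrt two_ne_zero ?_ ?_ ?_⟩
  · exact fun h ↦ hpF ⟨hp.squarefree, hp.ne_one, h⟩
  · exact fun h ↦ hqF ⟨hq.squarefree, hq.ne_one, h⟩
  · exact fun h ↦ hpqF ⟨hpq_sf, by simp [hp.ne_one], by exact_mod_cast h⟩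
end
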